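/- For every positive integer n, the cardinality of 𝒟_n equals Σ_b n! · Σ_{α ⊆ V(b)} Π_{v ∈ α} 1/h(v), where the sum is over all unlabeled binary trees b on n vertices and h(v) is the number of descendants of v (including v). -/

import Mathlib

/-- Unlabeled binary trees: each vertex has an (optional) left and right subtree.
`nil` is the empty tree. -/
inductive UBT : Type
  | nil : UBT
  | node : UBT → UBT → UBT
deriving DecidableEq

/-- Number of vertices of an unlabeled binary tree. -/
def UBT.size : UBT → ℕ
  | .nil => 0
  | .node l r => l.size + r.size + 1

/-- The vertex set of an unlabeled binary tree, encoded as root-to-vertex paths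
(`false` = step to the left child, `true` = step to the right child). -/
def UBT.verts : UBT → Finset (List Bool)
  | .nil => ∅
  | .node l r => insert [] ((l.verts.image (List.cons false)) ∪ (r.verts.image (List.cons true)))

/-- The descendant subtree at a given position, so for a vertex `v` of `b`,
`h(v) = ((b.sub v).size`, the number of descendants of `v` (including `v`). -/
def UBT.sub : UBT → List Bool → UBT
  | t, [] => t
  | .nil, _ => .nil
  | .node l r, b :: p => if b then r.sub p else l.sub p

/-- The (finite) set of all unlabeled binary trees on `n` vertices. -/
def treesOfSize : ℕ → Finset UBT
  | 0 => {UBT.nil}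
  | n + 1 =>
      (Finset.range (n + 1)).attach.biUnion fun i =>
        ((treesOfSize i.1) ×ˢ (treesOfSize (n - i.1))).image fun p => UBT.node p.1 p.2
decreasing_by
  all_goals (have := i.2; simp only [Finset.mem_range] at this; omega)

/-- Labeled bicolored binary trees: each vertex carries a label and a color
(`true` = black, `false` = white), and has a left and a right (possibly empty) subtree. -/
inductive CBT : Type
  | nil : CBT
  | node (label : ℕ) (black : Bool) (l r : CBT) : CBT
deriving DecidableEq

/-- The multiset of labels of a bicolored binary tree. -/
def CBT.labels : CBT → Multiset ℕ
  | .nil => 0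
  | .node a _ l r => a ::ₘ (l.labels + r.labels)

/-- The smallest label of a bicolored binary tree (`⊤` for the empty tree). -/
noncomputable def CBT.minL : CBT → ℕ∞
  | .nil => ⊤
  | .node a _ l r => min (a : ℕ∞) (min l.minL r.minL)

/-- A vertex is *proper* if its label is the smallest among its descendants (including
itself), and *improper* otherwise; so the vertex `node a c l r` is improper iff
`min l.minL r.minL < a`.  `CBT.improperBlack B` says every improper vertex of `B` is black. -/
def CBT.improperBlack : CBT → Prop
  | .nil => True
  | .node a c l r =>
      (min l.minL r.minL < (a : ℕ∞) → c = true) ∧ l.improperBlack ∧ r.improperBlack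

/-- `𝒟_n`: bicolored binary trees on `[n] = {1,…,n}` whose improper vertices are all black. -/
def Dset (n : ℕ) : Set CBT :=
  {B | B.labels = (Finset.Icc 1 n).val ∧ B.improperBlack}

/-! Both sides satisfy the recurrence `d (m + 1) = (m + 2) * ∑ k, (m choose k) * d k * d (m - k)`.
For trees in `𝒟` on a label set `S` of size `m + 1`, a tree is its root label `a`, the root
colour, the label set `L ⊆ S \ {a}` of the left subtree and the two subtrees; the root is proper
exactly when `a = min S`, so there are `m + 2` choices of (label, colour) for the root.
For shapes, `∑_{α ⊆ V(b)} ∏_{v ∈ α} 1/h(v) = ∏_{v ∈ V(b)} (1 + 1/h(v))` is multiplicative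
over the root decomposition, the root contributing `(m + 2)/(m + 1)`, and
`(m + 1)! * (m + 2)/(m + 1) = (m + 2) * (m choose k) * k! * (m - k)!`. -/

open Finset
open scoped Nat

theorem Finset.cons_eq_val_iff {α : Type*} [DecidableEq α] {s : Finset α} {a : α}
    {m : Multiset α} : a ::ₘ m = s.val ↔ a ∈ s ∧ m = (s.erase a).val := by
  constructor
  · intro h
    refine ⟨mem_def.mpr (h ▸ Multiset.mem_cons_self a m), ?_⟩
    rw [erase_val, ← h, Multiset.erase_cons_head]
  · rintro ⟨ha, rfl⟩
    rw [erase_val]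
    exact Multiset.cons_erase (mem_def.mp ha)

theorem Finset.add_eq_val_iff {α : Type*} [DecidableEq α] {s : Finset α}
    {m₁ m₂ : Multiset α} : m₁ + m₂ = s.val ↔ ∃ t ⊆ s, m₁ = t.val ∧ m₂ = (s \ t).val := by
  constructor
  · intro h
    have hle : m₁ ≤ s.val := h ▸ Multiset.le_add_right m₁ m₂
    refine ⟨⟨m₁, Multiset.nodup_of_le hle s.nodup⟩, val_le_iff.mp hle, rfl, ?_⟩
    change m₂ = s.val - m₁
    rw [← h, add_tsub_cancel_left]
  · rintro ⟨t, ht, rfl, rfl⟩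
    rw [sdiff_val]
    exact add_tsub_cancel_of_le (val_le_iff.mpr ht)

theorem mem_treesOfSize {n : ℕ} {b : UBT} : b ∈ treesOfSize n ↔ b.size = n := by
  induction b generalizing n with
  | nil => cases n <;> simp [treesOfSize, UBT.size]
  | node l r ihl ihr =>
    cases n with
    | zero => simp [treesOfSize, UBT.size]
    | succ n =>
      rw [treesOfSize]
      simp only [mem_biUnion, mem_attach, mem_image, mem_product, Prod.exists, UBT.node.injEq,
        UBT.size, true_and, Subtype.exists, mem_range]
      constructor
      · rintro ⟨k, hk, l, r, ⟨hl, hr⟩, rfl, rfl⟩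
        have := ihl.mp hl
        have := ihr.mp hr
        omega
      · intro h
        exact ⟨l.size, by omega, l, r, ⟨ihl.mpr rfl, ihr.mpr (by omega)⟩, rfl, rfl⟩

theorem sum_treesOfSize_succ {M : Type*} [AddCommMonoid M] (f : UBT → M) (n : ℕ) :
    ∑ b ∈ treesOfSize (n + 1), f b =
      ∑ k ∈ range (n + 1), ∑ l ∈ treesOfSize k, ∑ r ∈ treesOfSize (n - k), f (.node l r) := by
  rw [treesOfSize, sum_biUnion ?disjoint]
  case disjoint =>
    intro i _ j _ hij
    simp only [Function.onFun, disjoint_left, mem_image, mem_product, not_exists, not_and]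
    rintro _ ⟨⟨l, r⟩, ⟨hl, -⟩, rfl⟩ ⟨l', r'⟩ ⟨hl', -⟩ h
    cases h
    exact hij (Subtype.ext ((mem_treesOfSize.mp hl).symm.trans (mem_treesOfSize.mp hl')))
  refine (sum_congr rfl fun k _ => ?_).trans (sum_attach (range (n + 1)) fun k =>
    ∑ l ∈ treesOfSize k, ∑ r ∈ treesOfSize (n - k), f (.node l r))
  rw [sum_image fun p _ q _ h => by cases p; cases q; cases h; rfl, sum_product]

namespace UBT

theorem prod_verts_node {M : Type*} [CommMonoid M] (f : UBT → M) (l r : UBT) :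
    ∏ v ∈ (node l r).verts, f ((node l r).sub v) =
      f (node l r) * ((∏ v ∈ l.verts, f (l.sub v)) * ∏ v ∈ r.verts, f (r.sub v)) := by
  have hroot : [] ∉ l.verts.image (List.cons false) ∪ r.verts.image (List.cons true) := by
    simp
  have hdisj : Disjoint (l.verts.image (List.cons false)) (r.verts.image (List.cons true)) := by
    simp [disjoint_left]
  rw [verts, prod_insert hroot, prod_union hdisj, prod_image (by simp), prod_image (by simp)]
  simp [sub]

def hookWeight (b : UBT) : ℚ := ∏ v ∈ b.verts, (1 + 1 / ((b.sub v).size : ℚ))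

theorem hookWeight_node (l r : UBT) :
    (node l r).hookWeight = (1 + 1 / ((node l r).size : ℚ)) * (l.hookWeight * r.hookWeight) :=
  prod_verts_node (fun t => 1 + 1 / (t.size : ℚ)) l r

end UBT

def hookSum (n : ℕ) : ℚ := ∑ b ∈ treesOfSize n, (n ! : ℚ) * b.hookWeight

theorem factorial_succ_mul_one_add_inv {n k : ℕ} (hk : k ≤ n) :
    ((n + 1)! : ℚ) * (1 + 1 / ((n + 1 : ℕ) : ℚ)) = (n + 2) * n.choose k * k ! * (n - k)! := by
  have hchoose : (n.choose k * k ! * (n - k)! : ℚ) = n ! := by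
    exact_mod_cast Nat.choose_mul_factorial_mul_factorial hk
  rw [mul_assoc, mul_assoc, ← mul_assoc (n.choose k : ℚ), hchoose, Nat.factorial_succ]
  push_cast
  field_simp
  ring

theorem hookSum_succ (n : ℕ) :
    hookSum (n + 1) = (n + 2) * ∑ k ∈ range (n + 1), n.choose k * hookSum k * hookSum (n - k) := by
  rw [hookSum, sum_treesOfSize_succ, mul_sum]
  refine sum_congr rfl fun k hk => ?_
  have hkn : k ≤ n := Nat.lt_succ_iff.mp (mem_range.mp hk)
  simp only [hookSum, mul_sum, sum_mul]
  rw [sum_comm (s := treesOfSize (n - k))]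
  refine sum_congr rfl fun l hl => sum_congr rfl fun r hr => ?_
  have hsize : (UBT.node l r).size = n + 1 := by
    rw [UBT.size, mem_treesOfSize.mp hl, mem_treesOfSize.mp hr]; omega
  rw [UBT.hookWeight_node, hsize, ← mul_assoc, factorial_succ_mul_one_add_inv hkn]
  ring

namespace CBT

theorem minL_lt_iff {B : CBT} {a : ℕ} : B.minL < a ↔ ∃ x ∈ B.labels, x < a := by
  induction B with
  | nil => simp [minL, labels]
  | node b c l r ihl ihr =>
    simp only [minL, labels, min_lt_iff, ihl, ihr, Nat.cast_lt, Multiset.mem_cons,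
      Multiset.mem_add, or_and_right, exists_or, exists_eq_left]

theorem improperBlack_node {a : ℕ} {c : Bool} {l r : CBT} :
    (node a c l r).improperBlack ↔
      ((∃ x ∈ l.labels + r.labels, x < a) → c = true) ∧ l.improperBlack ∧ r.improperBlack := by
  simp only [improperBlack, min_lt_iff, minL_lt_iff, Multiset.mem_add, or_and_right, exists_or]

def rootColors (S : Finset ℕ) (a : ℕ) : Finset Bool :=
  if ∃ x ∈ S, x < a then {true} else {false, true}

theorem mem_rootColors {S : Finset ℕ} {a : ℕ} {c : Bool} :
    c ∈ rootColors S a ↔ ((∃ x ∈ S, x < a) → c = true) := by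
  rw [rootColors]
  split_ifs with h <;> simp [h]

def treesOn (S : Finset ℕ) : Finset CBT :=
  if S = ∅ then {nil}
  else S.attach.biUnion fun a => (S.erase a).powerset.attach.biUnion fun L =>
    (rootColors S a ×ˢ (treesOn L ×ˢ treesOn (S.erase a \ L))).image
      fun p => node a p.1 p.2.1 p.2.2
termination_by S.card
decreasing_by
  · exact card_lt_card ((mem_powerset.mp L.2).trans_ssubset (erase_ssubset a.2))
  · exact card_lt_card (sdiff_subset.trans_ssubset (erase_ssubset a.2))

theorem nil_mem_treesOn {S : Finset ℕ} : nil ∈ treesOn S ↔ S = ∅ := by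
  rw [treesOn]
  split_ifs with hS <;> simp [hS]

theorem node_mem_treesOn {S : Finset ℕ} {a : ℕ} {c : Bool} {l r : CBT} :
    node a c l r ∈ treesOn S ↔ a ∈ S ∧ ∃ L ⊆ S.erase a,
      c ∈ rootColors S a ∧ l ∈ treesOn L ∧ r ∈ treesOn (S.erase a \ L) := by
  rw [treesOn]
  split_ifs with hS
  · simp [hS]
  · simp only [mem_biUnion, mem_attach, mem_image, mem_product, node.injEq, true_and,
      Subtype.exists, mem_powerset, Prod.exists]
    constructor
    · rintro ⟨a, ha, L, hL, c, l, r, ⟨hc, hl, hr⟩, rfl, rfl, rfl, rfl⟩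
      exact ⟨ha, L, hL, hc, hl, hr⟩
    · rintro ⟨ha, L, hL, hc, hl, hr⟩
      exact ⟨a, ha, L, hL, c, l, r, ⟨hc, hl, hr⟩, rfl, rfl, rfl, rfl⟩

theorem mem_treesOn {S : Finset ℕ} {B : CBT} :
    B ∈ treesOn S ↔ B.labels = S.val ∧ B.improperBlack := by
  induction B generalizing S with
  | nil => simp [nil_mem_treesOn, labels, improperBlack, eq_comm (a := (0 : Multiset ℕ))]
  | node a c l r ihl ihr =>
    simp only [node_mem_treesOn, ihl, ihr, mem_rootColors, labels, cons_eq_val_iff,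
      add_eq_val_iff, improperBlack_node]
    constructor
    · rintro ⟨ha, L, hL, hc, ⟨hl, hlb⟩, hr, hrb⟩
      refine ⟨⟨ha, L, hL, hl, hr⟩, fun ⟨x, hx, hxa⟩ => hc ⟨x, ?_, hxa⟩, hlb, hrb⟩
      rw [add_eq_val_iff.mpr ⟨L, hL, hl, hr⟩] at hx
      exact mem_of_mem_erase hx
    · rintro ⟨⟨ha, L, hL, hl, hr⟩, hc, hlb, hrb⟩
      refine ⟨ha, L, hL, fun ⟨x, hx, hxa⟩ => hc ⟨x, ?_, hxa⟩, ⟨hl, hlb⟩, hr, hrb⟩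
      rw [add_eq_val_iff.mpr ⟨L, hL, hl, hr⟩]
      exact mem_erase.mpr ⟨hxa.ne, hx⟩

theorem card_treesOn_of_nonempty {S : Finset ℕ} (hS : S.Nonempty) :
    (treesOn S).card = ∑ a ∈ S, (rootColors S a).card *
      ∑ L ∈ (S.erase a).powerset, (treesOn L).card * (treesOn (S.erase a \ L)).card := by
  rw [treesOn, if_neg hS.ne_empty, card_biUnion ?rootDisjoint]
  case rootDisjoint =>
    intro a _ a' _ haa'
    simp only [Function.onFun, disjoint_left, mem_biUnion, mem_image, not_exists, not_and]
    rintro _ ⟨L, -, p, -, rfl⟩ L' - p' - h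
    exact haa' (Subtype.ext (node.inj h).1.symm)
  refine (sum_congr rfl fun a _ => ?_).trans (sum_attach S fun a => (rootColors S a).card *
      ∑ L ∈ (S.erase a).powerset, (treesOn L).card * (treesOn (S.erase a \ L)).card)
  rw [card_biUnion ?leftDisjoint]
  case leftDisjoint =>
    intro L _ L' _ hLL'
    simp only [Function.onFun, disjoint_left, mem_image, mem_product, not_exists, not_and]
    rintro _ ⟨⟨c, l, r⟩, ⟨-, hl, -⟩, rfl⟩ ⟨c', l', r'⟩ ⟨-, hl', -⟩ h
    obtain ⟨-, -, rfl, -⟩ := node.inj h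
    exact hLL' (Subtype.ext (val_injective ((mem_treesOn.mp hl).1.symm.trans
      (mem_treesOn.mp hl').1)))
  rw [mul_sum, ← sum_attach (S.erase a.1).powerset]
  refine sum_congr rfl fun L _ => ?_
  rw [card_image_of_injective _ fun p q h => ?inj, card_product, card_product]
  case inj =>
    obtain ⟨-, h1, h2, h3⟩ := node.inj h
    exact Prod.ext h1 (Prod.ext h2 h3)

theorem card_rootColors {S : Finset ℕ} (hS : S.Nonempty) {a : ℕ} (ha : a ∈ S) :
    (rootColors S a).card = 1 + if a = S.min' hS then 1 else 0 := by
  have hsmaller : (∃ x ∈ S, x < a) ↔ a ≠ S.min' hS := by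
    constructor
    · rintro ⟨x, hx, hxa⟩ rfl
      exact (S.min'_le x hx).not_gt hxa
    · intro hne
      exact ⟨S.min' hS, S.min'_mem hS, lt_of_le_of_ne (S.min'_le a ha) hne.symm⟩
  by_cases h : a = S.min' hS
  · rw [rootColors, if_neg (hsmaller.not.mpr (not_not.mpr h)), if_pos h]
    simp
  · rw [rootColors, if_pos (hsmaller.mpr h), if_neg h]
    simp

theorem sum_card_rootColors {S : Finset ℕ} (hS : S.Nonempty) :
    ∑ a ∈ S, (rootColors S a).card = S.card + 1 := by
  rw [sum_congr rfl fun a ha => card_rootColors hS ha, sum_add_distrib, sum_ite_eq',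
    if_pos (S.min'_mem hS)]
  simp

theorem card_treesOn (S : Finset ℕ) : ((treesOn S).card : ℚ) = hookSum S.card := by
  induction hn : S.card using Nat.strong_induction_on generalizing S with
  | _ n ih =>
    rcases S.eq_empty_or_nonempty with rfl | hS
    · subst hn
      simp [treesOn, hookSum, treesOfSize, UBT.hookWeight, UBT.verts]
    obtain ⟨m, rfl⟩ : ∃ m, n = m + 1 := Nat.exists_eq_add_one.mpr (hn ▸ hS.card_pos)
    have hsplit : ∀ a ∈ S, ∑ L ∈ (S.erase a).powerset,
        ((treesOn L).card * (treesOn (S.erase a \ L)).card : ℚ) =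
          ∑ k ∈ range (m + 1), m.choose k * hookSum k * hookSum (m - k) := by
      intro a ha
      have herase : (S.erase a).card = m := by rw [card_erase_of_mem ha, hn]; rfl
      calc ∑ L ∈ (S.erase a).powerset, ((treesOn L).card * (treesOn (S.erase a \ L)).card : ℚ)
          = ∑ L ∈ (S.erase a).powerset, hookSum L.card * hookSum (m - L.card) := by
            refine sum_congr rfl fun L hL => ?_
            have hLsub := mem_powerset.mp hL
            have hLle : L.card ≤ m := herase ▸ card_le_card hLsub
            rw [ih L.card (by omega) L rfl,
              ih (m - L.card) (by omega) _ (by rw [card_sdiff_of_subset hLsub, herase])]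
        _ = ∑ k ∈ range (m + 1), m.choose k • (hookSum k * hookSum (m - k)) := by
            rw [sum_powerset_apply_card fun k => hookSum k * hookSum (m - k), herase]
        _ = _ := by simp only [nsmul_eq_mul, mul_assoc]
    rw [card_treesOn_of_nonempty hS]
    push_cast
    rw [sum_congr rfl fun a ha => by rw [hsplit a ha], ← sum_mul]
    rw_mod_cast [sum_card_rootColors hS, hn, hookSum_succ]
    push_cast
    ring

end CBT

theorem card_Dset_eq_RHS_general (n : ℕ) :
    (Nat.card (Dset n) : ℚ) =
      ∑ b ∈ treesOfSize n, (n.factorial : ℚ) *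
        ∑ α ∈ b.verts.powerset, ∏ v ∈ α, (1 : ℚ) / ((b.sub v).size : ℚ) := by
  have hDset : Dset n = CBT.treesOn (Icc 1 n) := by
    ext B
    simp [Dset, CBT.mem_treesOn]
  rw [hDset, Nat.card_coe_set_eq, Set.ncard_coe_finset, CBT.card_treesOn, Nat.card_Icc,
    Nat.add_sub_cancel, hookSum]
  simp only [UBT.hookWeight, prod_one_add]

/-- The cardinality of `𝒟_n` equals `Σ_b n! Σ_{α ⊆ V(b)} Π_{v ∈ α} 1/h(v)`, where `b`
ranges over unlabeled binary trees on `n` vertices and `h(v)` is the number of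
descendants of `v` (including `v`). -/
theorem card_Dset_eq_RHS (n : ℕ) (hn : 0 < n) :
    (Nat.card (Dset n) : ℚ) =
      ∑ b ∈ treesOfSize n, (n.factorial : ℚ) *
        ∑ α ∈ b.verts.powerset, ∏ v ∈ α, (1 : ℚ) / ((b.sub v).size : ℚ) :=
  card_Dset_eq_RHS_general n
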